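/- Any nonzero central solution f: S → ℂ of the Van Vleck equation f(xσ(y)z₀) − f(xyz₀) = 2f(x)f(y) has the form f = ((χ − χ∘σ)/2)·χ(σ(z₀)), where χ: S → ℂ is multiplicative with χ(z₀) ≠ 0 and χ(σ(z₀)) = −χ(z₀). -/

import Mathlib

/-!
Let `x₀` be a point with `f x₀ ≠ 0`. Combining the Van Vleck equation with itself at `(x, y * z)` and
`(x * σ y, z)`, and using centrality of `f` and `z₀` to rotate products, shows that `f` satisfies the
sine addition law `f (x * y) = f x * g y + g x * f y` with `g x = (f (x * x₀) - f (x * σ x₀)) / (2 * f x₀)`.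
For any sine addition pair, `g (x * y) - g x * g y = l * f x * f y` for a constant `l`, so with `μ ^ 2 = l`
the function `χ = g + μ * f` is multiplicative. Since `f` is `σ`-odd and `g` is `σ`-even, plugging the
sine addition law back into the Van Vleck equation forces `g z₀ = 0` and `l * f z₀ = -1`, which gives
the stated form of `f` with `χ (σ z₀) = -μ * f z₀`.
-/

section SineAddition

variable {S K : Type*} [Semigroup S]

section CommRing

variable [CommRing K] {f g : S → K}

theorem sineAddition_defect_comm (hfg : ∀ x y, f (x * y) = f x * g y + g x * f y) (x y z : S) :
    f x * (g (y * z) - g y * g z) = f z * (g (x * y) - g x * g y) := by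
  have h₁ := hfg x (y * z)
  rw [← mul_assoc] at h₁
  linear_combination hfg (x * y) z - h₁ - g x * hfg y z + g z * hfg x y

theorem add_mul_map_mul_of_sineAddition (hfg : ∀ x y, f (x * y) = f x * g y + g x * f y) {l μ : K}
    (hl : ∀ y z, g (y * z) = g y * g z + l * f y * f z) (hμ : μ ^ 2 = l) (x y : S) :
    g (x * y) + μ * f (x * y) = (g x + μ * f x) * (g y + μ * f y) := by
  linear_combination hl x y + μ * hfg x y - f x * f y * hμ

end CommRing

theorem exists_sineAddition_defect_eq [Field K] {f g : S → K}
    (hfg : ∀ x y, f (x * y) = f x * g y + g x * f y) {x₀ : S} (hx₀ : f x₀ ≠ 0) :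
    ∃ l : K, ∀ y z, g (y * z) = g y * g z + l * f y * f z := by
  refine ⟨(g (x₀ * x₀) - g x₀ * g x₀) / (f x₀ * f x₀), fun y z => ?_⟩
  field_simp
  linear_combination f x₀ * sineAddition_defect_comm hfg x₀ y z +
    f z * sineAddition_defect_comm hfg x₀ x₀ y

end SineAddition

theorem apply_mul_mul_swap_of_central {S α : Type*} [Semigroup S] {f : S → α}
    (hf : ∀ x y, f (x * y) = f (y * x)) {z : S} (hz : ∀ x, z * x = x * z) (a b : S) :
    f (a * b * z) = f (b * a * z) := by
  rw [mul_assoc, hf, mul_assoc, hz, mul_assoc]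

section VanVleck

variable {S K : Type*} [Semigroup S] [Field K]

def IsVanVleckSolution (σ : S → S) (z₀ : S) (f : S → K) : Prop :=
  ∀ x y, f (x * σ y * z₀) - f (x * y * z₀) = 2 * f x * f y

def vanVleckCosine (σ : S → S) (f : S → K) (x₀ : S) (x : S) : K :=
  (f (x * x₀) - f (x * σ x₀)) / (2 * f x₀)

variable [CharZero K] {σ : S → S} {z₀ : S} {f : S → K}

theorem IsVanVleckSolution.apply_involution_eq_neg (hf : IsVanVleckSolution σ z₀ f)
    (hσσ : ∀ x, σ (σ x) = x) {x₀ : S} (hx₀ : f x₀ ≠ 0) (y : S) : f (σ y) = -f y := by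
  have h₂ := hf x₀ (σ y)
  rw [hσσ] at h₂
  have key : 2 * f x₀ * (f y + f (σ y)) = 0 := by linear_combination -hf x₀ y - h₂
  linear_combination (mul_eq_zero.mp key).resolve_left (mul_ne_zero two_ne_zero hx₀)

theorem IsVanVleckSolution.two_mul_apply_mul_mul_apply (hf : IsVanVleckSolution σ z₀ f)
    (hσ : (∀ x y, σ (x * y) = σ x * σ y) ∨ (∀ x y, σ (x * y) = σ y * σ x))
    (hcentral : ∀ x y, f (x * y) = f (y * x)) (hz : ∀ x, z₀ * x = x * z₀) (x y z : S) :
    2 * f (x * z) * f y = f z * (f (x * y) - f (x * σ y)) + f x * (f (z * y) - f (z * σ y)) := by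
  have hswap := apply_mul_mul_swap_of_central hcentral hz
  -- Both cases of `σ` reduce to this, with `w = y * z` or `w = z * y`.
  have key : ∀ x y z w, σ w = σ y * σ z →
      2 * f (z * x) * f y + f (x * y * z * z₀) - f (x * w * z₀) =
        2 * f x * f w - 2 * f (x * σ y) * f z := by
    intro x y z w hw
    have h₁ := hf x w
    rw [hw, ← mul_assoc] at h₁
    have hrot : f (x * σ y * z * z₀) = f (z * x * σ y * z₀) := by
      rw [hswap (x * σ y) z, ← mul_assoc]
    have hrot' : f (z * x * y * z₀) = f (x * y * z * z₀) := by rw [mul_assoc z, hswap z (x * y)]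
    linear_combination h₁ - hf (x * σ y) z - hrot - hf (z * x) y - hrot'
  rcases hσ with hmul | hmul
  · have h₁ := key x y z (y * z) (hmul y z)
    have h₂ := key z y x (y * x) (hmul y x)
    rw [← mul_assoc] at h₁ h₂
    linear_combination (h₁ + h₂) / 2 - f y * hcentral z x + f z * hcentral y x + f x * hcentral y z
  · have h₁ := key x y z (z * y) (hmul z y)
    have h₂ := key z y x (x * y) (hmul x y)
    linear_combination (h₁ + h₂ - hswap (z * y) x - hswap (x * y) z) / 2 - f y * hcentral z x

theorem IsVanVleckSolution.sineAddition (hf : IsVanVleckSolution σ z₀ f)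
    (hσ : (∀ x y, σ (x * y) = σ x * σ y) ∨ (∀ x y, σ (x * y) = σ y * σ x))
    (hcentral : ∀ x y, f (x * y) = f (y * x)) (hz : ∀ x, z₀ * x = x * z₀) {x₀ : S} (hx₀ : f x₀ ≠ 0)
    (x y : S) : f (x * y) = f x * vanVleckCosine σ f x₀ y + vanVleckCosine σ f x₀ x * f y := by
  unfold vanVleckCosine
  field_simp
  linear_combination hf.two_mul_apply_mul_mul_apply hσ hcentral hz x x₀ y

theorem IsVanVleckSolution.vanVleckCosine_apply_involution (hf : IsVanVleckSolution σ z₀ f)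
    (hσ : (∀ x y, σ (x * y) = σ x * σ y) ∨ (∀ x y, σ (x * y) = σ y * σ x))
    (hσσ : ∀ x, σ (σ x) = x) (hcentral : ∀ x y, f (x * y) = f (y * x)) (hz : ∀ x, z₀ * x = x * z₀)
    {x₀ : S} (hx₀ : f x₀ ≠ 0) (y : S) :
    vanVleckCosine σ f x₀ (σ y) = vanVleckCosine σ f x₀ y := by
  set g := vanVleckCosine σ f x₀
  have hfg := hf.sineAddition hσ hcentral hz hx₀
  have key : f x₀ * f x₀ * (g y - g (σ y)) = 0 := by
    linear_combination (-1 / 2 : K) * hf.two_mul_apply_mul_mul_apply hσ hcentral hz x₀ y x₀ +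
      f y * hfg x₀ x₀ - f x₀ * hfg x₀ y + f x₀ * hfg x₀ (σ y) +
      f x₀ * g x₀ * hf.apply_involution_eq_neg hσσ hx₀ y
  linear_combination -(mul_eq_zero.mp key).resolve_left (mul_ne_zero hx₀ hx₀)

theorem IsVanVleckSolution.const_mul_apply_eq_neg_one_and_cosine_eq_zero
    (hf : IsVanVleckSolution σ z₀ f) {g : S → K} (hfg : ∀ x y, f (x * y) = f x * g y + g x * f y)
    {l : K} (hl : ∀ y z, g (y * z) = g y * g z + l * f y * f z) (hodd : ∀ y, f (σ y) = -f y)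
    (heven : ∀ y, g (σ y) = g y) {x₀ : S} (hx₀ : f x₀ ≠ 0) : l * f z₀ = -1 ∧ g z₀ = 0 := by
  have hrel : ∀ x y, g x * f y * g z₀ + (l * f z₀ + 1) * (f x * f y) = 0 := by
    intro x y
    have h₁ := hfg x (σ y)
    have h₂ := hl x (σ y)
    rw [heven y, hodd y] at h₁ h₂
    linear_combination (-1 / 2 : K) * hf x y + (1 / 2 : K) * hfg (x * σ y) z₀ -
      (1 / 2 : K) * hfg (x * y) z₀ + (g z₀ / 2) * h₁ - (g z₀ / 2) * hfg x y +
      (f z₀ / 2) * h₂ - (f z₀ / 2) * hl x y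
  have hx₀₀ := mul_ne_zero hx₀ hx₀
  have hl' : l * f z₀ = -1 := by
    have h := hrel (σ x₀) x₀
    rw [heven, hodd] at h
    have key : (l * f z₀ + 1) * (f x₀ * f x₀) = 0 := by linear_combination (hrel x₀ x₀ - h) / 2
    linear_combination (mul_eq_zero.mp key).resolve_right hx₀₀
  refine ⟨hl', ?_⟩
  have key : g z₀ * g z₀ * f x₀ = 0 := by linear_combination hrel z₀ x₀ - f z₀ * f x₀ * hl'
  exact mul_self_eq_zero.mp ((mul_eq_zero.mp key).resolve_right hx₀)

end VanVleck

theorem stmt14 {S : Type*} [Semigroup S] (σ : S → S) (hσ : (∀ x y, σ (x * y) = σ x * σ y) ∨ (∀ x y, σ (x * y) = σ y * σ x))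
    (hσσ : ∀ x, σ (σ x) = x)
    (z₀ : S) (hz : ∀ x, z₀ * x = x * z₀) (f : S → ℂ) (hf0 : f ≠ 0)
    (hcentral : ∀ x y, f (x * y) = f (y * x)) (hf : ∀ x y, f (x * σ y * z₀) - f (x * y * z₀) = 2 * f x * f y) :
    ∃ χ : S → ℂ, (∀ x y, χ (x * y) = χ x * χ y) ∧ χ z₀ ≠ 0 ∧
      χ (σ z₀) = -χ z₀ ∧ ∀ x, f x = (χ x - χ (σ x)) / 2 * χ (σ z₀) := by
  have hf : IsVanVleckSolution σ z₀ f := hf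
  obtain ⟨x₀, hx₀ : f x₀ ≠ 0⟩ := Function.ne_iff.mp hf0
  have hodd := hf.apply_involution_eq_neg hσσ hx₀
  have heven := hf.vanVleckCosine_apply_involution hσ hσσ hcentral hz hx₀
  have hfg := hf.sineAddition hσ hcentral hz hx₀
  obtain ⟨l, hl⟩ := exists_sineAddition_defect_eq hfg hx₀
  obtain ⟨hlz, hgz⟩ := hf.const_mul_apply_eq_neg_one_and_cosine_eq_zero hfg hl hodd heven hx₀
  obtain ⟨μ, hμ⟩ := IsAlgClosed.exists_pow_nat_eq l two_pos
  have hμz : μ * f z₀ ≠ 0 := by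
    intro h
    have : l * f z₀ = 0 := by rw [← hμ]; linear_combination μ * h
    simp [this] at hlz
  refine ⟨fun x => vanVleckCosine σ f x₀ x + μ * f x, add_mul_map_mul_of_sineAddition hfg hl hμ,
    ?_, ?_, fun x => ?_⟩
  · simpa [hgz] using hμz
  · simp only [heven, hodd, hgz]
    ring
  · simp only [heven, hodd, hgz]
    linear_combination f x * f z₀ * hμ + f x * hlz
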